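/- arXiv:2409.00723 — 2 statements merged into one kernel-verified Lean document; each statement's English description precedes it below -/
import Mathlib

section
/- If A ∈ ℂ^{I×L} is a Vandermonde matrix with distinct generators a_1, ..., a_L, then for any matrix B ∈ ℂ^{J×L} with no zero columns, the Khatri–Rao product A ⊙ B has rank L whenever I ≥ L. -/
/-- If `A` is an `I×L` Vandermonde matrix with pairwise distinct generators and `I ≥ L`,
then for any `B ∈ ℂ^{J×L}` with no zero columns, the Khatri–Rao product `A ⊙ B`
has rank `L`. -/
theorem khatriRao_vandermonde_full_rank (I J L : ℕ) (hI : L ≤ I)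
    (a : Fin L → ℂ) (ha : Function.Injective a)
    (B : Matrix (Fin J) (Fin L) ℂ) (hB : ∀ l : Fin L, (fun j => B j l) ≠ 0) :
    (Matrix.of fun (p : Fin I × Fin J) (l : Fin L) =>
      a l ^ (p.1 : ℕ) * B p.2 l).rank = L := by
  set M : Matrix (Fin I × Fin J) (Fin L) ℂ :=
    Matrix.of fun (p : Fin I × Fin J) (l : Fin L) => a l ^ (p.1 : ℕ) * B p.2 l with hM
  have hinj : Function.Injective M.mulVecLin := by
    rw [← LinearMap.ker_eq_bot, LinearMap.ker_eq_bot']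
    intro c hc
    have hcol : ∀ l j, c l * B j l = 0 := by
      intro l j
      have hdet : ((Matrix.vandermonde a).transpose).det ≠ 0 := by
        rw [Matrix.det_transpose, Matrix.det_vandermonde_ne_zero_iff]; exact ha
      have key : Matrix.mulVec ((Matrix.vandermonde a).transpose) (fun l => c l * B j l) = 0 := by
        funext i
        have h0 := congrFun hc (⟨⟨(i : ℕ), lt_of_lt_of_le i.2 hI⟩, j⟩ : Fin I × Fin J)
        simp only [Matrix.mulVecLin_apply, Matrix.mulVec, dotProduct, hM,
          Matrix.of_apply, Pi.zero_apply] at h0 ⊢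
        rw [← h0]
        apply Finset.sum_congr rfl
        intro l _
        simp [Matrix.vandermonde]
        ring
      have := Matrix.eq_zero_of_mulVec_eq_zero hdet key
      exact congrFun this l
    funext l
    obtain ⟨j, hj⟩ : ∃ j, B j l ≠ 0 := by
      by_contra h; push_neg at h; exact hB l (funext h)
    have h := hcol l j
    rcases mul_eq_zero.mp h with h' | h'
    · exact h'
    · exact absurd h' hj
  rw [Matrix.rank, LinearMap.finrank_range_of_inj hinj]
  simp
end

section
/- Uniqueness of generators from the column space: let A ∈ ℂ^{K×L} be Vandermonde with distinct generators z_1,...,z_L and K ≥ L + 1. If a nonzero vector v ∈ ℂ^{K} lies in the column space of A and satisfies the shift relation v(2:K) = z · v(1:K-1) for some z ∈ ℂ, then z ∈ {z_1,...,z_L} and v is a scalar multiple of the corresponding Vandermonde column. -/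
theorem eq_mul_pow_of_succ_eq_mul {M : Type*} [CommMonoid M] {K : ℕ} (hK : 0 < K)
    {v : Fin K → M} {ζ : M}
    (hshift : ∀ i : ℕ, ∀ h : i + 1 < K, v ⟨i + 1, h⟩ = ζ * v ⟨i, by omega⟩) (i : Fin K) :
    v i = v ⟨0, hK⟩ * ζ ^ (i : ℕ) := by
  obtain ⟨i, hi⟩ := i
  induction i with
  | zero => simp
  | succ n ih => rw [hshift n hi, ih (by omega), pow_succ', mul_left_comm]

/-- Otherwise `Fin.cons (-c) w` would be a nonzero vector killed by the nonsingular Vandermonde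
matrix on the distinct nodes `ζ, z 0, …, z (L - 1)`. -/
theorem mem_range_of_mul_pow_eq_sum_mul_pow {R : Type*} [CommRing R] [IsDomain R] {L : ℕ}
    {z : Fin L → R} (hz : Function.Injective z) {w : Fin L → R} {c ζ : R} (hc : c ≠ 0)
    (h : ∀ i : Fin (L + 1), c * ζ ^ (i : ℕ) = ∑ l, w l * z l ^ (i : ℕ)) :
    ζ ∈ Set.range z := by
  by_contra hζ
  have hinj : Function.Injective (Fin.cons ζ z : Fin (L + 1) → R) :=
    Fin.cons_injective_iff.2 ⟨hζ, hz⟩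
  have hcoeff : (Fin.cons (-c) w : Fin (L + 1) → R) = 0 :=
    Matrix.eq_zero_of_forall_pow_sum_mul_pow_eq_zero hinj fun i => by
      rw [Fin.sum_univ_succ]
      simp [← h i]
  exact hc (neg_eq_zero.1 (congrFun hcoeff 0))

/-- Uniqueness of generators from the column space: if a nonzero `v ∈ ℂ^K` lies
in the column space of a `K×L` Vandermonde matrix with pairwise distinct nonzero
generators, `K ≥ L + 1`, and satisfies the shift relation `v(2:K) = ζ v(1:K-1)`,
then `ζ` is one of the generators and `v` is a scalar multiple of the
corresponding Vandermonde column. -/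
theorem generator_uniqueness (K L : ℕ) (hKL : L + 1 ≤ K)
    (z : Fin L → ℂ) (hz : Function.Injective z)
    (v : Fin K → ℂ) (hv : v ≠ 0)
    (hcol : ∃ w : Fin L → ℂ,
      v = (Matrix.of fun (i : Fin K) (l : Fin L) => z l ^ (i : ℕ)).mulVec w)
    (ζ : ℂ)
    (hshift : ∀ i : ℕ, ∀ h : i + 1 < K,
      v ⟨i + 1, h⟩ = ζ * v ⟨i, by omega⟩) :
    ∃ l : Fin L, ζ = z l ∧ ∃ c : ℂ, ∀ i : Fin K, v i = c * z l ^ (i : ℕ) := by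
  have hK : 0 < K := by omega
  have hgeom := eq_mul_pow_of_succ_eq_mul hK hshift
  have hv0 : v ⟨0, hK⟩ ≠ 0 := fun h0 =>
    hv (funext fun i => by rw [hgeom i, h0, zero_mul, Pi.zero_apply])
  obtain ⟨w, hw⟩ := hcol
  obtain ⟨l, rfl⟩ : ζ ∈ Set.range z := mem_range_of_mul_pow_eq_sum_mul_pow hz hv0 fun i => by
    have hi := congrFun hw ⟨i, by omega⟩
    rw [hgeom] at hi
    simpa [Matrix.mulVec, dotProduct, mul_comm] using hi
  exact ⟨l, rfl, v ⟨0, hK⟩, hgeom⟩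
end
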